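/- Let K be a positive integer, Δx := 2π/K, and T > 0. Let ḡ : ℝ^K → ℝ^K be continuous and f̄ : ℝ^K → ℝ^K be continuously differentiable (components indexed by ℤ/Kℤ). Let u : [0,T) → ℝ^K be differentiable with derivative u̇, satisfying ∑_{k=1}^{K} f̄_k(u(0)) = 0, ∑_{j=1}^{K} ∑_{k=1}^{K} (∂f̄_j/∂v_k)(u(t)) ≠ 0 for all t ∈ [0,T), and the integral-form scheme: for all t ∈ [0,T) and all k, u̇_k(t) + ḡ_k(u(t)) = (δ_FD^{-1} f̄(u(t)))_k + 𝒞_d(u(t)). Then u also satisfies the average-difference scheme: for all t ∈ [0,T) and all k ∈ ℤ/Kℤ, (u̇_{k+1}(t) + ḡ_{k+1}(u(t)) − u̇_k(t) − ḡ_k(u(t)))/Δx = (f̄_{k+1}(u(t)) + f̄_k(u(t)))/2. -/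

import Mathlib

open Real Finset

/-- The trapezoidal partial sum `Δx(v₀/2 + ∑_{i=1}^{n−1} vᵢ + vₙ/2)` (with `Δx = 2π/K`
and periodic indexing, so that `v₀ = v_K`). -/
noncomputable def partialTrap (K : ℕ) (v : ZMod K → ℝ) (n : ℕ) : ℝ :=
  (2 * π / K) * (v 0 / 2 + (∑ i ∈ Finset.Ico 1 n, v (i : ZMod K)) + v (n : ZMod K) / 2)

/-- The trapezoidal antiderivative `δ_FD⁻¹`: for `k = 1,…,K` (periodic indexing),
`(δ_FD⁻¹v)_k = Δx(v₀/2 + ∑_{i=1}^{k−1} vᵢ + v_k/2) −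
(Δx²/(2π)) ∑_{i=1}^{K} (v₀/2 + ∑_{j=1}^{i−1} vⱼ + vᵢ/2)`. -/
noncomputable def deltaFDinv (K : ℕ) (v : ZMod K → ℝ) (k : ZMod K) : ℝ :=
  partialTrap K v (if k.val = 0 then K else k.val) -
    (1 / (2 * π)) * (2 * π / K) * ∑ i ∈ Finset.Icc 1 K, partialTrap K v i

/-- The discrete constant `𝒞_d(v)`, determined from the discrete implicit constraint:
`𝒞_d(v) = [∑_{j,k} (∂f̄ⱼ/∂v_k)(v)(ḡ_k(v) − (δ_FD⁻¹f̄(v))_k)] / [∑_{j,k} (∂f̄ⱼ/∂v_k)(v)]`. -/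
noncomputable def Cd (K : ℕ) [NeZero K]
    (fbar gbar : (ZMod K → ℝ) → ZMod K → ℝ) (v : ZMod K → ℝ) : ℝ :=
  (∑ j : ZMod K, ∑ k : ZMod K,
      fderiv ℝ (fun z => fbar z j) v (Pi.single k 1) * (gbar v k - deltaFDinv K (fbar v) k)) /
    (∑ j : ZMod K, ∑ k : ZMod K, fderiv ℝ (fun z => fbar z j) v (Pi.single k 1))

/-! Along a solution, `S(t) = ∑ⱼ f̄ⱼ(u(t))` has derivative `∑_{j,k} ∂ₖf̄ⱼ(u) u̇ₖ`, and substituting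
`u̇ₖ = (δ_FD⁻¹f̄(u))ₖ + 𝒞_d(u) − ḡₖ(u)` makes it vanish: `𝒞_d` is exactly the constant that does
so. Hence `S ≡ S(0) = 0`. For a zero-sum `v` the trapezoidal primitive is `K`-periodic, so the
forward difference of `δ_FD⁻¹v` is `Δx (vₖ₊₁ + vₖ)/2` for every `k`, including across the
wrap-around `K − 1 → 0`; subtracting the scheme at `k` from the scheme at `k + 1` gives the claim.
-/

section TrapezoidalPrimitive

variable {K : ℕ} (v : ZMod K → ℝ)

lemma sum_range_natCast_eq_sum_zmod [NeZero K] : ∑ i ∈ range K, v i = ∑ k : ZMod K, v k :=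
  sum_nbij' (fun i => (i : ZMod K)) ZMod.val (fun _ _ => mem_univ _)
    (fun k _ => mem_range.2 k.val_lt) (fun _ hi => ZMod.val_cast_of_lt (mem_range.1 hi))
    (fun k _ => ZMod.natCast_zmod_val k) (fun _ _ => rfl)

lemma sum_range_val_add_one_sub [NeZero K] (hv : ∑ k, v k = 0) (k : ZMod K) :
    ∑ i ∈ range (k + 1).val, v i - ∑ i ∈ range k.val, v i = v k := by
  have hcast : ((k.val + 1 : ℕ) : ZMod K) = k + 1 := by push_cast [ZMod.natCast_zmod_val]; rfl
  rw [← hcast, ZMod.val_natCast]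
  rcases lt_or_eq_of_le (show k.val + 1 ≤ K from k.val_lt) with hlt | hwrap
  · rw [Nat.mod_eq_of_lt hlt, sum_range_succ, ZMod.natCast_zmod_val]
    ring
  · have hfull := sum_range_natCast_eq_sum_zmod v
    rw [hv, ← congrArg range hwrap, sum_range_succ, ZMod.natCast_zmod_val] at hfull
    rw [hwrap, Nat.mod_self, range_zero, sum_empty]
    linarith

lemma partialTrap_eq_of_pos {n : ℕ} (hn : 0 < n) :
    partialTrap K v n = 2 * π / K * (∑ i ∈ range n, v i + (v n - v 0) / 2) := by
  rw [partialTrap, range_eq_Ico, sum_eq_sum_Ico_succ_bot hn, Nat.cast_zero]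
  ring

lemma partialTrap_ite_val_eq [NeZero K] (hv : ∑ k, v k = 0) (k : ZMod K) :
    partialTrap K v (if k.val = 0 then K else k.val) =
      2 * π / K * (∑ i ∈ range k.val, v i + (v k - v 0) / 2) := by
  split_ifs with hk
  · rw [partialTrap_eq_of_pos v (NeZero.pos K), sum_range_natCast_eq_sum_zmod, hv, hk,
      (ZMod.val_eq_zero k).1 hk, ZMod.natCast_self, range_zero, sum_empty]
  · rw [partialTrap_eq_of_pos v (Nat.pos_of_ne_zero hk), ZMod.natCast_zmod_val]

lemma deltaFDinv_add_one_sub [NeZero K] (hv : ∑ k, v k = 0) (k : ZMod K) :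
    deltaFDinv K v (k + 1) - deltaFDinv K v k = 2 * π / K * ((v (k + 1) + v k) / 2) := by
  rw [deltaFDinv, deltaFDinv, partialTrap_ite_val_eq v hv, partialTrap_ite_val_eq v hv]
  linear_combination 2 * π / K * sum_range_val_add_one_sub v hv k

end TrapezoidalPrimitive

lemma hasDerivWithinAt_sum_comp {ι : Type*} [Fintype ι] [DecidableEq ι]
    {f : (ι → ℝ) → ι → ℝ} {u : ℝ → ι → ℝ} {u' : ι → ℝ} {s : Set ℝ} {t : ℝ}
    (hf : DifferentiableAt ℝ f (u t)) (hu : HasDerivWithinAt u u' s t) :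
    HasDerivWithinAt (fun r => ∑ j, f (u r) j)
      (∑ j, ∑ k, fderiv ℝ (fun z => f z j) (u t) (Pi.single k 1) * u' k) s t := by
  refine HasDerivWithinAt.fun_sum fun j _ => ?_
  refine ((differentiableAt_pi.1 hf j).hasFDerivAt.comp_hasDerivWithinAt t hu).congr_deriv ?_
  conv_lhs => rw [← univ_sum_single u', map_sum]
  refine sum_congr rfl fun k _ => ?_
  rw [mul_comm, ← smul_eq_mul, ← map_smul, ← Pi.single_smul, smul_eq_mul, mul_one]

lemma Convex.eq_of_forall_hasDerivWithinAt_zero {E : Type*} [NormedAddCommGroup E]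
    [NormedSpace ℝ E] {f : ℝ → E} {s : Set ℝ} (hs : Convex ℝ s)
    (hf : ∀ x ∈ s, HasDerivWithinAt f 0 s x) {x y : ℝ} (hx : x ∈ s) (hy : y ∈ s) :
    f x = f y := by
  have h := hs.norm_image_sub_le_of_norm_hasDerivWithin_le (f' := fun _ => 0) (C := 0) hf
    (fun _ _ => by simp) hx hy
  rwa [zero_mul, norm_le_zero_iff, sub_eq_zero, eq_comm] at h

lemma sum_sum_fderiv_mul_deltaFDinv_add_Cd_sub_eq_zero (K : ℕ) [NeZero K]
    (fbar gbar : (ZMod K → ℝ) → ZMod K → ℝ) (v : ZMod K → ℝ)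
    (hD : ∑ j : ZMod K, ∑ k : ZMod K, fderiv ℝ (fun z => fbar z j) v (Pi.single k 1) ≠ 0) :
    ∑ j : ZMod K, ∑ k : ZMod K, fderiv ℝ (fun z => fbar z j) v (Pi.single k 1) *
      (deltaFDinv K (fbar v) k + Cd K fbar gbar v - gbar v k) = 0 := by
  rw [Cd]
  simp only [mul_sub, mul_add, sum_sub_distrib, sum_add_distrib, ← sum_mul]
  field_simp
  ring

theorem integral_form_to_averageDifference_general (K : ℕ) [NeZero K] (T : ℝ) (hT : 0 < T)
    (gbar fbar : (ZMod K → ℝ) → ZMod K → ℝ)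
    (hf : ContDiff ℝ 1 fbar)
    (u udot : ℝ → ZMod K → ℝ)
    (hderiv : ∀ t ∈ Set.Ico (0:ℝ) T, ∀ k : ZMod K,
      HasDerivWithinAt (fun s => u s k) (udot t k) (Set.Ico (0:ℝ) T) t)
    (h0 : (∑ k : ZMod K, fbar (u 0) k) = 0)
    (hnd : ∀ t ∈ Set.Ico (0:ℝ) T,
      (∑ j : ZMod K, ∑ k : ZMod K,
        fderiv ℝ (fun z => fbar z j) (u t) (Pi.single k 1)) ≠ 0)
    (hscheme : ∀ t ∈ Set.Ico (0:ℝ) T, ∀ k : ZMod K,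
      udot t k + gbar (u t) k = deltaFDinv K (fbar (u t)) k + Cd K fbar gbar (u t)) :
    ∀ t ∈ Set.Ico (0:ℝ) T, ∀ k : ZMod K,
      (udot t (k + 1) + gbar (u t) (k + 1) - udot t k - gbar (u t) k) / (2 * π / K) =
        (fbar (u t) (k + 1) + fbar (u t) k) / 2 := by
  have hconst : ∀ t ∈ Set.Ico (0:ℝ) T,
      HasDerivWithinAt (fun r => ∑ j, fbar (u r) j) 0 (Set.Ico 0 T) t := by
    intro t ht
    have hudot : ∀ k, udot t k =
        deltaFDinv K (fbar (u t)) k + Cd K fbar gbar (u t) - gbar (u t) k :=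
      fun k => by linarith [hscheme t ht k]
    have h := hasDerivWithinAt_sum_comp (hf.differentiable one_ne_zero (u t))
      (hasDerivWithinAt_pi.2 (hderiv t ht))
    simp only [hudot] at h
    rwa [sum_sum_fderiv_mul_deltaFDinv_add_Cd_sub_eq_zero K fbar gbar (u t) (hnd t ht)] at h
  have hconserved : ∀ t ∈ Set.Ico (0:ℝ) T, ∑ j, fbar (u t) j = 0 := fun t ht =>
    h0 ▸ (convex_Ico 0 T).eq_of_forall_hasDerivWithinAt_zero hconst ht ⟨le_rfl, hT⟩
  intro t ht k
  have hK : (0 : ℝ) < K := Nat.cast_pos.2 (NeZero.pos K)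
  rw [div_eq_iff (by positivity)]
  linarith [hscheme t ht k, hscheme t ht (k + 1),
    deltaFDinv_add_one_sub (fbar (u t)) (hconserved t ht) k]

/-- A solution of the integral-form scheme
`u̇_k + ḡ_k(u) = (δ_FD⁻¹f̄(u))_k + 𝒞_d(u)` on `[0,T)` with `∑_k f̄_k(u(0)) = 0` and
satisfying the nondegeneracy condition `∑_{j,k} (∂f̄ⱼ/∂v_k)(u(t)) ≠ 0` also solves the
average-difference scheme `δ⁺ₓ(u̇_k + ḡ_k(u)) = μ⁺ₓ f̄_k(u)`. -/
theorem integral_form_to_averageDifference (K : ℕ) [NeZero K] (T : ℝ) (hT : 0 < T)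
    (gbar fbar : (ZMod K → ℝ) → ZMod K → ℝ)
    (hg : Continuous gbar) (hf : ContDiff ℝ 1 fbar)
    (u udot : ℝ → ZMod K → ℝ)
    (hderiv : ∀ t ∈ Set.Ico (0:ℝ) T, ∀ k : ZMod K,
      HasDerivWithinAt (fun s => u s k) (udot t k) (Set.Ico (0:ℝ) T) t)
    (h0 : (∑ k : ZMod K, fbar (u 0) k) = 0)
    (hnd : ∀ t ∈ Set.Ico (0:ℝ) T,
      (∑ j : ZMod K, ∑ k : ZMod K,
        fderiv ℝ (fun z => fbar z j) (u t) (Pi.single k 1)) ≠ 0)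
    (hscheme : ∀ t ∈ Set.Ico (0:ℝ) T, ∀ k : ZMod K,
      udot t k + gbar (u t) k = deltaFDinv K (fbar (u t)) k + Cd K fbar gbar (u t)) :
    ∀ t ∈ Set.Ico (0:ℝ) T, ∀ k : ZMod K,
      (udot t (k + 1) + gbar (u t) (k + 1) - udot t k - gbar (u t) k) / (2 * π / K) =
        (fbar (u t) (k + 1) + fbar (u t) k) / 2 :=
  integral_form_to_averageDifference_general K T hT gbar fbar hf u udot hderiv h0 hnd hscheme
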